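/- The integer symmetric matrices [[18, 2], [2, −2]] and [[20, 0], [0, −2]] are ℤ-congruent: there exists a 2×2 integer matrix P with det P = 1 or det P = −1 such that Pᵀ · [[18, 2], [2, −2]] · P = [[20, 0], [0, −2]]. Equivalently, the lattice Λ₁₀^{2,−2} (a genus-10 quasi-polarization together with a conic) is isomorphic to the lattice Λ₁₁^{0,−2} (a genus-11 quasi-polarization together with an orthogonal (−2)-class, i.e. a nodal K3 surface of genus 11). -/

import Mathlib

open Matrix

/- The change of basis `h₁ ↦ h₁ + h₂` does it: `(h₁ + h₂)² = 18 + 2·2 − 2 = 20` and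
`(h₁ + h₂)·h₂ = 2 − 2 = 0`. -/

theorem transpose_shear_mul_mul_shear {R : Type*} [CommRing R] (a b c : R) :
    !![1, 0; 1, 1]ᵀ * !![a, b; b, c] * !![(1 : R), 0; 1, 1] =
      !![a + 2 * b + c, b + c; b + c, c] := by
  ext i j
  fin_cases i <;> fin_cases j <;> simp [mul_apply, Fin.sum_univ_two]
  ring

/-- The Gram matrices `[[18, 2], [2, −2]]` and `[[20, 0], [0, −2]]` are `ℤ`-congruent, i.e. the
lattice `Λ₁₀^{2,−2}` (genus-10 quasi-polarization plus a conic) is isomorphic to the lattice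
`Λ₁₁^{0,−2}` (genus-11 quasi-polarization plus an orthogonal `(−2)`-class). -/
theorem Lambda_ten_two_minus_two_congruent_Lambda_eleven_zero_minus_two :
    ∃ P : Matrix (Fin 2) (Fin 2) ℤ, (P.det = 1 ∨ P.det = -1) ∧
      Pᵀ * !![18, 2; 2, -2] * P = !![20, 0; 0, -2] := by
  refine ⟨!![1, 0; 1, 1], Or.inl (by simp [det_fin_two]), ?_⟩
  rw [transpose_shear_mul_mul_shear]
  norm_num
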